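/- For every a ∈ ℝ, the Mehler kernel S_a satisfies the harmonic-oscillator heat equation on ℝ × (0,∞): ∂_t S_a(x,t) = ∂²_x S_a(x,t) − (a²x²/4) S_a(x,t) for all x ∈ ℝ and t > 0. -/

import Mathlib

/-! Look for solutions of the form `A(t) exp(-x² B(t))`. Substituting this Gaussian ansatz
into `∂_t S = ∂²_x S − (a²x²/4) S` and comparing the coefficients of `1` and `x²` leaves the
system `A' = −2BA`, `B' = a²/4 − 4B²` (a Riccati equation for `B`). Writing the Mehler kernel
in this form gives `B(t) = (a/4) coth(at)` (`1/(4t)` for `a = 0`), which solves the Riccati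
equation because `coth² − 1 = 1/sinh²`, and `A(t) = (4πt)^{-1/2} (at/sinh(at))^{1/2}`, whose
logarithmic derivative `−1/(2t) + 1/(2t) − (a/2) coth(at)` is `−2B`. -/

open Real

/-- The Mehler kernel `S_a(x,t) = (4πt)^{−1/2} (at/sinh(at))^{1/2} exp(−(x²/(4t))·(at/tanh(at)))`,
with the conventions `at/sinh(at) = at/tanh(at) = 1` when `a = 0`. -/
noncomputable def mehlerS (a x t : ℝ) : ℝ :=
  (4 * Real.pi * t) ^ (-(1 : ℝ) / 2) *
    Real.sqrt (if a = 0 then 1 else (a * t) / Real.sinh (a * t)) *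
    Real.exp (-(x ^ 2 / (4 * t)) * (if a = 0 then 1 else (a * t) / Real.tanh (a * t)))

section GaussianAnsatz

lemma hasDerivAt_mul_exp_neg_sq_mul (A B y : ℝ) :
    HasDerivAt (fun z => A * exp (-z ^ 2 * B)) (-2 * B * y * (A * exp (-y ^ 2 * B))) y := by
  have h : HasDerivAt (fun z => A * exp (-z ^ 2 * B)) _ y :=
    (((hasDerivAt_pow 2 y).neg.mul_const B).exp).const_mul A
  convert h using 1
  simp only [Pi.neg_apply]
  push_cast
  ring

lemma deriv_deriv_mul_exp_neg_sq_mul (A B x : ℝ) :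
    deriv (deriv fun y => A * exp (-y ^ 2 * B)) x
      = (4 * x ^ 2 * B ^ 2 - 2 * B) * (A * exp (-x ^ 2 * B)) := by
  have hfirst : deriv (fun y => A * exp (-y ^ 2 * B))
      = fun y => -2 * B * y * (A * exp (-y ^ 2 * B)) :=
    funext fun y => (hasDerivAt_mul_exp_neg_sq_mul A B y).deriv
  have hsecond : HasDerivAt (fun y => -2 * B * y * (A * exp (-y ^ 2 * B))) _ x :=
    ((hasDerivAt_id x).const_mul (-2 * B)).mul (hasDerivAt_mul_exp_neg_sq_mul A B x)
  rw [hfirst, hsecond.deriv]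
  simp only [id]
  ring

theorem deriv_mul_exp_neg_sq_mul_eq_of_riccati {A B : ℝ → ℝ} {a t : ℝ}
    (hA : HasDerivAt A (-2 * B t * A t) t) (hB : HasDerivAt B (a ^ 2 / 4 - 4 * B t ^ 2) t)
    (x : ℝ) :
    deriv (fun s => A s * exp (-x ^ 2 * B s)) t
      = deriv (deriv fun y => A t * exp (-y ^ 2 * B t)) x
        - a ^ 2 * x ^ 2 / 4 * (A t * exp (-x ^ 2 * B t)) := by
  have htime : HasDerivAt (fun s => A s * exp (-x ^ 2 * B s)) _ t :=
    hA.mul (hB.const_mul (-x ^ 2)).exp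
  rw [htime.deriv, deriv_deriv_mul_exp_neg_sq_mul]
  ring

end GaussianAnsatz

section Hyperbolic

lemma hasDerivAt_const_mul_rpow_neg_half {c t : ℝ} (hct : 0 < c * t) :
    HasDerivAt (fun s => (c * s) ^ (-(1 : ℝ) / 2)) (-(1 / (2 * t)) * (c * t) ^ (-(1 : ℝ) / 2)) t := by
  have h : HasDerivAt (fun s => (c * s) ^ (-(1 : ℝ) / 2)) _ t :=
    (hasDerivAt_const_mul c).rpow_const (p := -(1 : ℝ) / 2) (Or.inl hct.ne')
  have ht : t ≠ 0 := right_ne_zero_of_mul hct.ne'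
  have hc : c ≠ 0 := left_ne_zero_of_mul hct.ne'
  convert h using 1
  rw [rpow_sub hct, rpow_one]
  field_simp

lemma div_sinh_pos {u : ℝ} (hu : u ≠ 0) : 0 < u / sinh u := by
  rcases hu.lt_or_gt with h | h
  · exact div_pos_of_neg_of_neg h (sinh_neg_iff.mpr h)
  · exact div_pos h (sinh_pos_iff.mpr h)

lemma hasDerivAt_sqrt_mul_div_sinh {a t : ℝ} (hat : a * t ≠ 0) :
    HasDerivAt (fun s => √(a * s / sinh (a * s)))
      ((1 / (2 * t) - a * cosh (a * t) / (2 * sinh (a * t))) * √(a * t / sinh (a * t))) t := by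
  have hlin : HasDerivAt (fun s => a * s) a t := hasDerivAt_const_mul a
  have hsinh : sinh (a * t) ≠ 0 := fun h => hat (sinh_eq_zero.mp h)
  have hpos := div_sinh_pos hat
  have h : HasDerivAt (fun s => √(a * s / sinh (a * s))) _ t :=
    (hlin.div hlin.sinh hsinh).sqrt hpos.ne'
  have ht : t ≠ 0 := right_ne_zero_of_mul hat
  have hroot : √(a * t / sinh (a * t)) ^ 2 = a * t / sinh (a * t) := sq_sqrt hpos.le
  have hroot_ne : √(a * t / sinh (a * t)) ≠ 0 := (sqrt_pos.mpr hpos).ne'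
  convert h using 1
  simp only [Pi.div_apply]
  set u := a * t with hu
  field_simp
  rw [hroot]
  field_simp
  rw [hu]
  ring

lemma hasDerivAt_mul_cosh_div_sinh {a t : ℝ} (hat : a * t ≠ 0) :
    HasDerivAt (fun s => a * cosh (a * s) / (4 * sinh (a * s)))
      (a ^ 2 / 4 - 4 * (a * cosh (a * t) / (4 * sinh (a * t))) ^ 2) t := by
  have hlin : HasDerivAt (fun s => a * s) a t := hasDerivAt_const_mul a
  have hsinh : sinh (a * t) ≠ 0 := fun h => hat (sinh_eq_zero.mp h)
  have h : HasDerivAt (fun s => a * cosh (a * s) / (4 * sinh (a * s))) _ t :=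
    (hlin.cosh.const_mul a).div (hlin.sinh.const_mul 4) (mul_ne_zero four_ne_zero hsinh)
  convert h using 1
  field_simp

end Hyperbolic

section MehlerKernel

noncomputable def mehlerAmplitude (a s : ℝ) : ℝ :=
  (4 * π * s) ^ (-(1 : ℝ) / 2) * √(if a = 0 then 1 else a * s / sinh (a * s))

noncomputable def mehlerRate (a s : ℝ) : ℝ :=
  if a = 0 then 1 / (4 * s) else a * cosh (a * s) / (4 * sinh (a * s))

lemma mehlerS_eq_mehlerAmplitude_mul_exp (a x s : ℝ) :
    mehlerS a x s = mehlerAmplitude a s * exp (-x ^ 2 * mehlerRate a s) := by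
  unfold mehlerS mehlerAmplitude mehlerRate
  split_ifs with ha
  · ring_nf
  · rcases eq_or_ne s 0 with rfl | hs
    · -- both exponents vanish because `x / 0 = 0`
      simp
    · have hsinh : sinh (a * s) ≠ 0 := fun h => mul_ne_zero ha hs (sinh_eq_zero.mp h)
      have hexponent : -(x ^ 2 / (4 * s)) * (a * s / tanh (a * s))
          = -x ^ 2 * (a * cosh (a * s) / (4 * sinh (a * s))) := by
        rw [tanh_eq_sinh_div_cosh]
        field_simp
      rw [hexponent]

variable {a t : ℝ}

lemma hasDerivAt_mehlerRate (ht : t ≠ 0) :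
    HasDerivAt (mehlerRate a) (a ^ 2 / 4 - 4 * mehlerRate a t ^ 2) t := by
  unfold mehlerRate
  by_cases ha : a = 0
  · simp only [ha, if_true]
    have h : HasDerivAt (fun s => (4 * s)⁻¹) _ t :=
      (hasDerivAt_const_mul 4).fun_inv (mul_ne_zero four_ne_zero ht)
    simp only [one_div]
    convert h using 1
    field_simp
    ring
  · simp only [ha, if_false]
    exact hasDerivAt_mul_cosh_div_sinh (mul_ne_zero ha ht)

lemma hasDerivAt_mehlerAmplitude (ht : 0 < t) :
    HasDerivAt (mehlerAmplitude a) (-2 * mehlerRate a t * mehlerAmplitude a t) t := by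
  have hpow := hasDerivAt_const_mul_rpow_neg_half (c := 4 * π) (t := t) (by positivity)
  unfold mehlerAmplitude mehlerRate
  by_cases ha : a = 0
  · simp only [ha, if_true, sqrt_one, mul_one]
    convert hpow using 1
    ring
  · simp only [ha, if_false]
    have hsinh : sinh (a * t) ≠ 0 := fun h => mul_ne_zero ha ht.ne' (sinh_eq_zero.mp h)
    have h : HasDerivAt (fun s => (4 * π * s) ^ (-(1 : ℝ) / 2) * √(a * s / sinh (a * s))) _ t :=
      hpow.mul (hasDerivAt_sqrt_mul_div_sinh (mul_ne_zero ha ht.ne'))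
    convert h using 1
    field_simp
    ring

end MehlerKernel

theorem stmt_4 (a : ℝ) : ∀ (x t : ℝ), 0 < t →
    deriv (fun s => mehlerS a x s) t =
      deriv (deriv (fun y => mehlerS a y t)) x - (a ^ 2 * x ^ 2 / 4) * mehlerS a x t := by
  intro x t ht
  simp only [mehlerS_eq_mehlerAmplitude_mul_exp]
  exact deriv_mul_exp_neg_sq_mul_eq_of_riccati
    (hasDerivAt_mehlerAmplitude ht) (hasDerivAt_mehlerRate ht.ne') x
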